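/- Let N ≥ 1 be an integer, h ≠ 0, R > 0, ε > 0, μ > 0. Set θ_j = 2π(j−1)/N, let Q_j be the rotation matrix of angle θ_j, P_j = R·Q_j·(1,0), M = diag(h/√(h²+R²), 1), and M_j = Q_j M, for j = 1,…,N. Let c₁ = Rh/(2(h²+R²)^{3/2}), c₂ = (R²/(8(h²+R²)²))·(2h²/(h²+R²) + 1), let h₁ : [0,∞) → ℝ be any function, and define Ψ_{εμ}(z) = log(8/(ε²μ² + |z|²)²)·(1 + c₁ z₁ + c₂|z|²) + (4R³/(h(h²+R²)^{3/2}))·h₁(|z|)cos(3θ), where z = |z|e^{iθ}. Define Ψ₀(z) = Σ_{j=1}^N Ψ_{εμ}(M_j^{-1}(P₁ − P_j + Mz)). Then Ψ₀(z₁, z₂) = Ψ₀(z₁, −z₂) for all (z₁,z₂) ∈ ℝ². -/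

import Mathlib

open Real

noncomputable section

/-- Points of `ℝ²` as pairs. -/
abbrev R2 : Type := ℝ × ℝ

/-- Rotation of `ℝ²` by angle `θ`. -/
def rot (θ : ℝ) (p : R2) : R2 :=
  (Real.cos θ * p.1 - Real.sin θ * p.2, Real.sin θ * p.1 + Real.cos θ * p.2)

/-- The linear map `M = diag(h/√(h²+R²), 1)`. -/
def Mmap (h R : ℝ) (z : R2) : R2 := (h / Real.sqrt (h ^ 2 + R ^ 2) * z.1, z.2)

/-- The inverse `M⁻¹ = diag(√(h²+R²)/h, 1)`. -/
def Minv (h R : ℝ) (p : R2) : R2 := (Real.sqrt (h ^ 2 + R ^ 2) / h * p.1, p.2)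

/-- `M_j⁻¹ = M⁻¹ Q_j⁻¹`, with `Q_j` the rotation of angle `θ_j = 2πj/N`
(indices `j : ℕ` starting from `0` represent `j+1 = 1, …, N`). -/
def Mjinv (h R : ℝ) (N : ℕ) (j : ℕ) (p : R2) : R2 :=
  Minv h R (rot (-(2 * Real.pi * j / N)) p)

/-- The vertex `P_j = R·Q_{2πj/N}·(1,0)` of the regular `N`-gon of radius `R`. -/
def Pt (R : ℝ) (N : ℕ) (j : ℕ) : R2 := rot (2 * Real.pi * j / N) (R, 0)

/-- The polar angle of `z ∈ ℝ²`. -/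
def argR2 (z : R2) : ℝ := Complex.arg ((z.1 : ℂ) + (z.2 : ℂ) * Complex.I)

/-- The locally defined approximate stream function of one helical filament:
`Ψ_{εμ}(z) = log(8/(ε²μ²+|z|²)²)(1 + c₁z₁ + c₂|z|²) + (4R³/(h(h²+R²)^{3/2})) h₁(|z|)cos 3θ`,
with `c₁ = Rh/(2(h²+R²)^{3/2})` and `c₂ = (R²/(8(h²+R²)²))(2h²/(h²+R²)+1)`. -/
def PsiEps (h R ε μ : ℝ) (h₁ : ℝ → ℝ) (z : R2) : ℝ :=
  Real.log (8 / (ε ^ 2 * μ ^ 2 + z.1 ^ 2 + z.2 ^ 2) ^ 2)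
      * (1 + R * h / (2 * Real.sqrt (h ^ 2 + R ^ 2) ^ 3) * z.1
          + R ^ 2 / (8 * (h ^ 2 + R ^ 2) ^ 2) * (2 * h ^ 2 / (h ^ 2 + R ^ 2) + 1)
            * (z.1 ^ 2 + z.2 ^ 2))
    + 4 * R ^ 3 / (h * Real.sqrt (h ^ 2 + R ^ 2) ^ 3)
        * h₁ (Real.sqrt (z.1 ^ 2 + z.2 ^ 2)) * Real.cos (3 * argR2 z)

/-- The total approximate stream function in the coordinates `z = M⁻¹(x − P₁)` centered
at the first vertex: `Ψ₀(z) = ∑_{j=1}^N Ψ_{εμ}(M_j⁻¹(P₁ − P_j + Mz))`. -/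
def Psi0 (N : ℕ) (h R ε μ : ℝ) (h₁ : ℝ → ℝ) (z : R2) : ℝ :=
  ∑ j ∈ Finset.range N,
    PsiEps h R ε μ h₁ (Mjinv h R N j (Pt R N 0 - Pt R N j + Mmap h R z))

/-!
Complex conjugation `(z₁, z₂) ↦ (z₁, -z₂)` fixes the vertex `P₁`, maps the vertex of angle
`θ_j` to the one of angle `-θ_j` (index `j ↦ N - j` mod `N`), commutes with `M` and turns
`Q_θ` into `Q_{-θ}`; hence it carries the `j`-th argument of `Ψ₀(z̄)` to the conjugate of the
`(N - j)`-th argument of `Ψ₀(z)`. Since `Ψ_{εμ}` only sees `z₂` through `z₂²` and `cos 3θ`,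
it is invariant under conjugation, and the two sums agree after reindexing.
-/

def conjR2 (p : R2) : R2 := (p.1, -p.2)

lemma conjR2_conjR2 (p : R2) : conjR2 (conjR2 p) = p := by
  simp only [conjR2, neg_neg]

lemma conjR2_add (p q : R2) : conjR2 (p + q) = conjR2 p + conjR2 q := by
  simp only [conjR2, Prod.fst_add, Prod.snd_add, neg_add, Prod.mk_add_mk]

lemma conjR2_sub (p q : R2) : conjR2 (p - q) = conjR2 p - conjR2 q := by
  simp only [conjR2, Prod.fst_sub, Prod.snd_sub, neg_sub_neg, Prod.mk_sub_mk, neg_sub]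

lemma conjR2_rot (θ : ℝ) (p : R2) : conjR2 (rot θ p) = rot (-θ) (conjR2 p) := by
  simp only [rot, conjR2, Real.cos_neg, Real.sin_neg, Prod.mk.injEq]
  constructor <;> ring

lemma conjR2_Minv (h R : ℝ) (p : R2) : conjR2 (Minv h R p) = Minv h R (conjR2 p) := rfl

lemma conjR2_Mmap (h R : ℝ) (p : R2) : conjR2 (Mmap h R p) = Mmap h R (conjR2 p) := rfl

lemma cos_mul_argR2_conjR2 (k : ℝ) (z : R2) :
    Real.cos (k * argR2 (conjR2 z)) = Real.cos (k * argR2 z) := by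
  have hconj : (z.1 : ℂ) + ((-z.2 : ℝ) : ℂ) * Complex.I
      = (starRingEnd ℂ) ((z.1 : ℂ) + (z.2 : ℂ) * Complex.I) := by
    simp
  rw [argR2, argR2, conjR2, hconj, Complex.arg_conj]
  split_ifs with hπ
  · rw [hπ]
  · rw [mul_neg, Real.cos_neg]

lemma PsiEps_conjR2 (h R ε μ : ℝ) (h₁ : ℝ → ℝ) (z : R2) :
    PsiEps h R ε μ h₁ (conjR2 z) = PsiEps h R ε μ h₁ z := by
  rw [PsiEps, PsiEps, cos_mul_argR2_conjR2]
  simp only [conjR2, neg_sq]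

lemma rot_angle_neg_mod {N j : ℕ} (hj : j < N) :
    rot (2 * π * ((N - j) % N : ℕ) / N) = rot (-(2 * π * j / N)) := by
  rcases Nat.eq_zero_or_pos j with rfl | hj₀
  · simp
  have hN : (N : ℝ) ≠ 0 := Nat.cast_ne_zero.mpr (by omega)
  have hangle : 2 * π * ((N - j) % N : ℕ) / N = 2 * π - 2 * π * j / N := by
    rw [Nat.mod_eq_of_lt (by omega), Nat.cast_sub hj.le]
    field_simp
  funext p
  rw [hangle, rot, rot, Real.cos_two_pi_sub, Real.sin_two_pi_sub, Real.cos_neg, Real.sin_neg]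

lemma conjR2_Pt_zero (R : ℝ) (N : ℕ) : conjR2 (Pt R N 0) = Pt R N 0 := by
  simp [Pt, rot, conjR2]

lemma Pt_neg_mod (R : ℝ) {N j : ℕ} (hj : j < N) :
    Pt R N ((N - j) % N) = conjR2 (Pt R N j) := by
  rw [Pt, Pt, rot_angle_neg_mod hj, conjR2_rot]
  simp [conjR2]

lemma Mjinv_conjR2 (h R : ℝ) {N j : ℕ} (hj : j < N) (p : R2) :
    Mjinv h R N j (conjR2 p) = conjR2 (Mjinv h R N ((N - j) % N) p) := by
  rw [Mjinv, Mjinv, conjR2_Minv, conjR2_rot, neg_neg, rot_angle_neg_mod hj]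

lemma PsiEps_Mjinv_conjR2 (h R ε μ : ℝ) (h₁ : ℝ → ℝ) {N j : ℕ} (hj : j < N) (z : R2) :
    PsiEps h R ε μ h₁ (Mjinv h R N j (Pt R N 0 - Pt R N j + Mmap h R (conjR2 z)))
      = PsiEps h R ε μ h₁
          (Mjinv h R N ((N - j) % N) (Pt R N 0 - Pt R N ((N - j) % N) + Mmap h R z)) := by
  have hpoint : Pt R N 0 - Pt R N j + Mmap h R (conjR2 z)
      = conjR2 (Pt R N 0 - Pt R N ((N - j) % N) + Mmap h R z) := by
    rw [conjR2_add, conjR2_sub, conjR2_Pt_zero, Pt_neg_mod R hj, conjR2_conjR2, conjR2_Mmap]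
  rw [hpoint, Mjinv_conjR2 h R hj, PsiEps_conjR2]

lemma sum_range_neg_mod {M : Type*} [AddCommMonoid M] (N : ℕ) (f : ℕ → M) :
    ∑ j ∈ Finset.range N, f ((N - j) % N) = ∑ j ∈ Finset.range N, f j := by
  rw [Finset.sum_range, Finset.sum_range]
  exact Fintype.sum_equiv (Equiv.neg (Fin N)) _ _ fun j => by simp [Fin.val_neg']

theorem Psi0_even_in_z2_general
    (N : ℕ) (h R ε μ : ℝ)
    (h₁ : ℝ → ℝ) :
    ∀ z₁ z₂ : ℝ, Psi0 N h R ε μ h₁ (z₁, z₂) = Psi0 N h R ε μ h₁ (z₁, -z₂) := by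
  intro z₁ z₂
  change _ = Psi0 N h R ε μ h₁ (conjR2 (z₁, z₂))
  rw [Psi0, Psi0, Finset.sum_congr rfl fun j hj =>
    PsiEps_Mjinv_conjR2 h R ε μ h₁ (Finset.mem_range.mp hj) (z₁, z₂)]
  exact (sum_range_neg_mod N _).symm

/-- **Evenness of the approximate stream function** (Proposition 3.2):
`Ψ₀(z₁, z₂) = Ψ₀(z₁, −z₂)`. -/
theorem Psi0_even_in_z2
    (N : ℕ) (hN : 1 ≤ N) (h R ε μ : ℝ) (hh : h ≠ 0) (hR : 0 < R) (hε : 0 < ε) (hμ : 0 < μ)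
    (h₁ : ℝ → ℝ) :
    ∀ z₁ z₂ : ℝ, Psi0 N h R ε μ h₁ (z₁, z₂) = Psi0 N h R ε μ h₁ (z₁, -z₂) :=
  Psi0_even_in_z2_general N h R ε μ h₁

end
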